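/- arXiv:2101.04292 — 2 statements merged into one kernel-verified Lean document; each statement's English description precedes it below -/
import Mathlib

section
/- Let X̃ ∈ 𝕆^{n×k}. Then max_{Q ∈ 𝕆^{k×k}} f_θ(X̃Q) = g_θ(X̃) + ‖X̃ᵀD‖_tr/(tr(X̃ᵀBX̃))^θ, and the maximum is attained at Q_opt = UVᵀ, where U, V ∈ 𝕆^{k×k} are the factors of any singular value decomposition X̃ᵀD = UΣVᵀ. -/
/-! Because `Q` is orthogonal, `f_θ(X̃Q) = g_θ(X̃) + tr(Qᵀ X̃ᵀD) / tr(X̃ᵀBX̃)^θ`, and the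
denominator is nonnegative since `B` is positive semidefinite; so everything reduces to von
Neumann's bound `tr(QᵀM) ≤ ‖M‖_tr`. In an orthonormal eigenbasis `P` of `MᵀM`,
`tr(QᵀM) = tr((QP)ᵀ(MP))` pairs the columns of `QP`, of norm `1`, with those of `MP`, of norm
`√λᵢ`, and Cauchy–Schwarz gives the bound. For `Q = UVᵀ` the trace is `Σ σᵢ`, which is `‖M‖_tr`
because `MᵀM = V Σ² Vᵀ` has eigenvalues `σᵢ²`. -/

open Matrix

noncomputable section

/-- `f_θ(X) = tr(XᵀAX + XᵀD) / (tr(XᵀBX))^θ`. -/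
def fTheta {n k : ℕ} (A B : Matrix (Fin n) (Fin n) ℝ) (D : Matrix (Fin n) (Fin k) ℝ)
    (θ : ℝ) (X : Matrix (Fin n) (Fin k) ℝ) : ℝ :=
  (trace (Xᵀ * A * X) + trace (Xᵀ * D)) / trace (Xᵀ * B * X) ^ θ

/-- `g_θ(X) = tr(XᵀAX) / (tr(XᵀBX))^θ`. -/
def gTheta {n k : ℕ} (A B : Matrix (Fin n) (Fin n) ℝ) (θ : ℝ)
    (X : Matrix (Fin n) (Fin k) ℝ) : ℝ :=
  trace (Xᵀ * A * X) / trace (Xᵀ * B * X) ^ θ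

/-- The trace norm (sum of singular values) of a real matrix. -/
def traceNorm {m k : ℕ} (M : Matrix (Fin m) (Fin k) ℝ) : ℝ :=
  ∑ i, Real.sqrt ((Matrix.isHermitian_conjTranspose_mul_self M).eigenvalues i)

open Finset

namespace Matrix

section

variable {ι κ : Type*} [Fintype ι] [Fintype κ]

theorem trace_transpose_mul_le_sum_sqrt (X Y : Matrix ι κ ℝ) :
    trace (Xᵀ * Y) ≤ ∑ i, √((Xᵀ * X) i i) * √((Yᵀ * Y) i i) := by
  refine sum_le_sum fun i _ => ?_
  simpa only [diag_apply, mul_apply, transpose_apply, ← sq] using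
    Real.sum_mul_le_sqrt_mul_sqrt univ (fun j => X j i) (fun j => Y j i)

variable [DecidableEq κ]

theorem trace_transpose_mul_mul_of_mul_transpose {Q M : Matrix κ κ ℝ} (hQ : Q * Qᵀ = 1) :
    trace (Qᵀ * M * Q) = trace M := by
  rw [trace_mul_cycle, hQ, Matrix.one_mul]

theorem IsHermitian.transpose_eigenvectorUnitary_mul_self {S : Matrix κ κ ℝ} (hS : S.IsHermitian) :
    (hS.eigenvectorUnitary : Matrix κ κ ℝ)ᵀ * hS.eigenvectorUnitary = 1 := by
  simpa [star_eq_conjTranspose, conjTranspose_eq_transpose_of_trivial] using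
    Unitary.coe_star_mul_self hS.eigenvectorUnitary

theorem IsHermitian.eigenvectorUnitary_mul_transpose_self {S : Matrix κ κ ℝ} (hS : S.IsHermitian) :
    (hS.eigenvectorUnitary : Matrix κ κ ℝ) * (hS.eigenvectorUnitary : Matrix κ κ ℝ)ᵀ = 1 := by
  simpa [star_eq_conjTranspose, conjTranspose_eq_transpose_of_trivial] using
    Unitary.coe_mul_star_self hS.eigenvectorUnitary

theorem IsHermitian.transpose_eigenvectorUnitary_mul_mul {S : Matrix κ κ ℝ} (hS : S.IsHermitian) :
    (hS.eigenvectorUnitary : Matrix κ κ ℝ)ᵀ * S * hS.eigenvectorUnitary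
      = diagonal hS.eigenvalues := by
  simpa [Unitary.conjStarAlgAut_apply, star_eq_conjTranspose,
    conjTranspose_eq_transpose_of_trivial, Function.comp_def] using
    hS.conjStarAlgAut_star_eigenvectorUnitary

theorem transpose_mul_self_mul_transpose {U : Matrix ι κ ℝ} {V : Matrix κ κ ℝ}
    (hU : Uᵀ * U = 1) (hV : Vᵀ * V = 1) : (U * Vᵀ)ᵀ * (U * Vᵀ) = 1 := by
  rw [transpose_mul, transpose_transpose, Matrix.mul_assoc, ← Matrix.mul_assoc Uᵀ, hU,
    Matrix.one_mul, mul_eq_one_comm.mp hV]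

theorem trace_transpose_mul_mul_diagonal_mul_transpose {U : Matrix ι κ ℝ} {V : Matrix κ κ ℝ}
    (hU : Uᵀ * U = 1) (hV : Vᵀ * V = 1) (σ : κ → ℝ) :
    trace ((U * Vᵀ)ᵀ * (U * diagonal σ * Vᵀ)) = ∑ i, σ i := by
  rw [transpose_mul, transpose_transpose, Matrix.mul_assoc, Matrix.mul_assoc U,
    ← Matrix.mul_assoc Uᵀ, hU, Matrix.one_mul, trace_mul_comm, Matrix.mul_assoc, hV,
    Matrix.mul_one, trace_diagonal]

open Polynomial in
theorem IsHermitian.sum_comp_eigenvalues_of_charpoly_eq {S : Matrix κ κ ℝ} (hS : S.IsHermitian)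
    {d : κ → ℝ} (h : S.charpoly = (diagonal d).charpoly) (g : ℝ → ℝ) :
    ∑ i, g (hS.eigenvalues i) = ∑ i, g (d i) := by
  have hroots : univ.val.map hS.eigenvalues = univ.val.map d := by
    have := hS.roots_charpoly_eq_eigenvalues
    rw [h, charpoly_diagonal, roots_prod _ _ (prod_ne_zero_iff.mpr fun i _ => X_sub_C_ne_zero _)]
      at this
    simpa using this.symm
  simpa only [Multiset.map_map, Function.comp_def, ← sum_eq_multiset_sum] using
    congrArg (fun s => (s.map g).sum) hroots

end

theorem trace_transpose_mul_le_traceNorm {m k : ℕ} {Q : Matrix (Fin m) (Fin k) ℝ}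
    (hQ : Qᵀ * Q = 1) (M : Matrix (Fin m) (Fin k) ℝ) : trace (Qᵀ * M) ≤ traceNorm M := by
  set hS := isHermitian_conjTranspose_mul_self M
  set P : Matrix (Fin k) (Fin k) ℝ := ↑hS.eigenvectorUnitary
  have hQP : (Q * P)ᵀ * (Q * P) = 1 := by
    rw [transpose_mul, Matrix.mul_assoc, ← Matrix.mul_assoc Qᵀ, hQ, Matrix.one_mul,
      hS.transpose_eigenvectorUnitary_mul_self]
  have hMP : (M * P)ᵀ * (M * P) = diagonal hS.eigenvalues := by
    rw [transpose_mul, ← conjTranspose_eq_transpose_of_trivial M,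
      ← hS.transpose_eigenvectorUnitary_mul_mul]
    simp only [P, Matrix.mul_assoc]
  calc trace (Qᵀ * M) = trace ((Q * P)ᵀ * (M * P)) := by
        rw [← trace_transpose_mul_mul_of_mul_transpose hS.eigenvectorUnitary_mul_transpose_self]
        simp only [P, transpose_mul, Matrix.mul_assoc]
    _ ≤ ∑ i, √(((Q * P)ᵀ * (Q * P)) i i) * √(((M * P)ᵀ * (M * P)) i i) :=
        trace_transpose_mul_le_sum_sqrt _ _
    _ = traceNorm M := by rw [hQP, hMP]; simp [traceNorm]

theorem traceNorm_mul_diagonal_mul_transpose {m k : ℕ} {U : Matrix (Fin m) (Fin k) ℝ}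
    {V : Matrix (Fin k) (Fin k) ℝ} (hU : Uᵀ * U = 1) (hV : Vᵀ * V = 1) {σ : Fin k → ℝ}
    (hσ : ∀ i, 0 ≤ σ i) : traceNorm (U * diagonal σ * Vᵀ) = ∑ i, σ i := by
  set M := U * diagonal σ * Vᵀ
  have hMM : Mᴴ * M = V * (diagonal (fun i => σ i ^ 2) * Vᵀ) := by
    simp only [M, conjTranspose_eq_transpose_of_trivial, transpose_mul, transpose_transpose,
      diagonal_transpose, Matrix.mul_assoc]
    rw [← Matrix.mul_assoc Uᵀ, hU, Matrix.one_mul, ← Matrix.mul_assoc (diagonal σ),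
      diagonal_mul_diagonal]
    simp only [sq]
  have hcp : (Mᴴ * M).charpoly = (diagonal fun i => σ i ^ 2).charpoly := by
    rw [hMM, charpoly_mul_comm, Matrix.mul_assoc, hV, Matrix.mul_one]
  unfold traceNorm
  rw [(isHermitian_conjTranspose_mul_self M).sum_comp_eigenvalues_of_charpoly_eq hcp Real.sqrt]
  exact sum_congr rfl fun i _ => Real.sqrt_sq (hσ i)

end Matrix

theorem fTheta_mul_of_transpose_mul_self {n k : ℕ} {A B : Matrix (Fin n) (Fin n) ℝ}
    {D : Matrix (Fin n) (Fin k) ℝ} {θ : ℝ} {X : Matrix (Fin n) (Fin k) ℝ}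
    {Q : Matrix (Fin k) (Fin k) ℝ} (hQ : Qᵀ * Q = 1) :
    fTheta A B D θ (X * Q)
      = gTheta A B θ X + trace (Qᵀ * (Xᵀ * D)) / trace (Xᵀ * B * X) ^ θ := by
  have hconj (C : Matrix (Fin n) (Fin n) ℝ) :
      trace ((X * Q)ᵀ * C * (X * Q)) = trace (Xᵀ * C * X) := by
    rw [← trace_transpose_mul_mul_of_mul_transpose (mul_eq_one_comm.mp hQ) (M := Xᵀ * C * X)]
    simp only [transpose_mul, Matrix.mul_assoc]
  rw [fTheta, gTheta, hconj, hconj, transpose_mul, Matrix.mul_assoc Qᵀ, add_div]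

theorem stmt3_general {n k : ℕ}
    (A B : Matrix (Fin n) (Fin n) ℝ) (hB : B.PosSemidef)
    (D : Matrix (Fin n) (Fin k) ℝ) (θ : ℝ)
    (Xt : Matrix (Fin n) (Fin k) ℝ) :
    (∀ Q : Matrix (Fin k) (Fin k) ℝ, Qᵀ * Q = 1 →
        fTheta A B D θ (Xt * Q)
          ≤ gTheta A B θ Xt + traceNorm (Xtᵀ * D) / trace (Xtᵀ * B * Xt) ^ θ)
      ∧ (∀ (U V : Matrix (Fin k) (Fin k) ℝ) (σ : Fin k → ℝ),
          Uᵀ * U = 1 → Vᵀ * V = 1 → (∀ i, 0 ≤ σ i) →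
          Xtᵀ * D = U * Matrix.diagonal σ * Vᵀ →
          fTheta A B D θ (Xt * (U * Vᵀ))
            = gTheta A B θ Xt + traceNorm (Xtᵀ * D) / trace (Xtᵀ * B * Xt) ^ θ) := by
  have hden : 0 ≤ trace (Xtᵀ * B * Xt) ^ θ := by
    have := (hB.conjTranspose_mul_mul_same Xt).trace_nonneg
    rw [conjTranspose_eq_transpose_of_trivial] at this
    exact Real.rpow_nonneg this θ
  refine ⟨fun Q hQ => ?_, fun U V σ hU hV hσ hsvd => ?_⟩
  · rw [fTheta_mul_of_transpose_mul_self hQ]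
    exact add_le_add le_rfl
      (div_le_div_of_nonneg_right (trace_transpose_mul_le_traceNorm hQ _) hden)
  · rw [fTheta_mul_of_transpose_mul_self (transpose_mul_self_mul_transpose hU hV), hsvd,
      trace_transpose_mul_mul_diagonal_mul_transpose hU hV,
      traceNorm_mul_diagonal_mul_transpose hU hV hσ]

/-- Theorem 2.5: `max_{Q ∈ 𝕆^{k×k}} f_θ(X̃Q) = g_θ(X̃) + ‖X̃ᵀD‖_tr/(tr(X̃ᵀBX̃))^θ`, attained
at `Q = UVᵀ` for any SVD `X̃ᵀD = UΣVᵀ`. -/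
theorem stmt3 {n k : ℕ} (hk : 1 ≤ k) (hkn : k < n)
    (A B : Matrix (Fin n) (Fin n) ℝ) (hA : A.IsSymm) (hB : B.PosSemidef)
    (hrank : n - k < B.rank)
    (D : Matrix (Fin n) (Fin k) ℝ) (θ : ℝ) (hθ0 : 0 ≤ θ) (hθ1 : θ ≤ 1)
    (Xt : Matrix (Fin n) (Fin k) ℝ) (hXt : Xtᵀ * Xt = 1) :
    (∀ Q : Matrix (Fin k) (Fin k) ℝ, Qᵀ * Q = 1 →
        fTheta A B D θ (Xt * Q)
          ≤ gTheta A B θ Xt + traceNorm (Xtᵀ * D) / trace (Xtᵀ * B * Xt) ^ θ)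
      ∧ (∀ (U V : Matrix (Fin k) (Fin k) ℝ) (σ : Fin k → ℝ),
          Uᵀ * U = 1 → Vᵀ * V = 1 → (∀ i, 0 ≤ σ i) →
          Xtᵀ * D = U * Matrix.diagonal σ * Vᵀ →
          fTheta A B D θ (Xt * (U * Vᵀ))
            = gTheta A B θ Xt + traceNorm (Xtᵀ * D) / trace (Xtᵀ * B * Xt) ^ θ) :=
  stmt3_general A B hB D θ Xt

end
end

section
/- Let S ∈ ℝ^{k×k} with singular value decomposition S = UΣVᵀ, where U, V ∈ 𝕆^{k×k} and Σ = diag(σ₁, …, σ_k) with σ₁ ≥ ⋯ ≥ σ_k ≥ 0, and let r = rank(S) (so σ_r > 0 = σ_{r+1} = ⋯ = σ_k when r < k). Then Q ∈ 𝕆^{k×k} is a maximizer of tr(QᵀS) over 𝕆^{k×k} if and only if Q = U_{(:,1:r)} V_{(:,1:r)}ᵀ + U_{(:,r+1:k)} W V_{(:,r+1:k)}ᵀ for some W ∈ 𝕆^{(k−r)×(k−r)} (the second term being absent when r = k), and the maximal value is σ₁ + ⋯ + σ_k = ‖S‖_tr. -/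
open Matrix

noncomputable section

/-- Columns `1:r` of a `k×k` matrix. -/
def colsFirst {k : ℕ} (M : Matrix (Fin k) (Fin k) ℝ) (r : ℕ) (h : r ≤ k) :
    Matrix (Fin k) (Fin r) ℝ :=
  M.submatrix id fun i => Fin.castLE h i

/-- Columns `r+1:k` of a `k×k` matrix. -/
def colsLast {k : ℕ} (M : Matrix (Fin k) (Fin k) ℝ) (r : ℕ) (h : r ≤ k) :
    Matrix (Fin k) (Fin (k - r)) ℝ :=
  M.submatrix id fun i : Fin (k - r) => ⟨r + i.1, by omega⟩


/-!
Put `M = Uᵀ Q V`, which is orthogonal exactly when `Q` is; then `tr(Qᵀ S) = ∑ σᵢ Mᵢᵢ`. A diagonal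
entry of an orthogonal matrix is at most `1`, so the trace is at most `∑ σᵢ`, with equality iff
`Mᵢᵢ = 1` whenever `σᵢ > 0`, i.e. for `i < r`. A unit column whose `i`-th entry is `1` is the
`i`-th basis vector, so `M` fixes `e₁, …, e_r`; being orthogonal it then also preserves their
orthogonal complement, i.e. `M = diag(I_r, W)` with `W` orthogonal. The trace norm identity holds
because `SᵀS = V diag(σ²) Vᵀ` has the characteristic polynomial of `diag(σ²)`.
-/

open Polynomial

section Orthogonal

variable {n : Type*} [Fintype n] [DecidableEq n] {M : Matrix n n ℝ}

lemma sum_mul_self_col_eq_one (hM : Mᵀ * M = 1) (j : n) : ∑ l, M l j * M l j = 1 := by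
  simpa [mul_apply] using congrFun (congrFun hM j) j

lemma diag_le_one_of_transpose_mul_self (hM : Mᵀ * M = 1) (j : n) : M j j ≤ 1 := by
  have hsq : M j j * M j j ≤ 1 := sum_mul_self_col_eq_one hM j ▸
    Finset.single_le_sum (fun l _ => mul_self_nonneg (M l j)) (Finset.mem_univ j)
  nlinarith

lemma col_eq_zero_of_diag_eq_one (hM : Mᵀ * M = 1) {j : n} (hj : M j j = 1) {i : n}
    (hij : i ≠ j) : M i j = 0 := by
  have hrest : ∑ l ∈ Finset.univ.erase j, M l j * M l j = 0 := by
    have := sum_mul_self_col_eq_one hM j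
    rw [← Finset.add_sum_erase _ _ (Finset.mem_univ j), hj] at this
    linarith
  exact mul_self_eq_zero.mp <| (Finset.sum_eq_zero_iff_of_nonneg fun l _ => mul_self_nonneg _).mp
    hrest i (Finset.mem_erase.mpr ⟨hij, Finset.mem_univ i⟩)

end Orthogonal

section WeightedSum

variable {ι : Type*} [Fintype ι] {σ d : ι → ℝ}

lemma sum_mul_le_sum_of_le_one (hσ : ∀ i, 0 ≤ σ i) (hd : ∀ i, d i ≤ 1) :
    ∑ i, σ i * d i ≤ ∑ i, σ i :=
  Finset.sum_le_sum fun i _ => mul_le_of_le_one_right (hσ i) (hd i)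

lemma sum_mul_eq_sum_iff_of_le_one (hσ : ∀ i, 0 ≤ σ i) (hd : ∀ i, d i ≤ 1) :
    ∑ i, σ i * d i = ∑ i, σ i ↔ ∀ i, 0 < σ i → d i = 1 := by
  have hgap : ∑ i, σ i - ∑ i, σ i * d i = ∑ i, σ i * (1 - d i) := by
    rw [← Finset.sum_sub_distrib]; congr! 1; ring
  have hnonneg : ∀ i ∈ Finset.univ, 0 ≤ σ i * (1 - d i) :=
    fun i _ => mul_nonneg (hσ i) (sub_nonneg.mpr (hd i))
  rw [eq_comm, ← sub_eq_zero, hgap, Finset.sum_eq_zero_iff_of_nonneg hnonneg]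
  refine forall_congr' fun i => ?_
  rw [mul_eq_zero, sub_eq_zero, eq_comm (a := (1 : ℝ)), (hσ i).lt_iff_ne', ← or_iff_not_imp_left]
  simp only [Finset.mem_univ, true_implies]

end WeightedSum

section Conjugation

variable {m n : Type*} [Fintype m] [Fintype n]

lemma trace_transpose_mul_svd [DecidableEq n] {l : Type*} [Fintype l] (Q : Matrix m l ℝ)
    (U : Matrix m n ℝ) (σ : n → ℝ) (V : Matrix l n ℝ) :
    trace (Qᵀ * (U * diagonal σ * Vᵀ)) = ∑ i, σ i * (Uᵀ * Q * V) i i := by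
  have hcycle : Qᵀ * (U * diagonal σ * Vᵀ) = (Qᵀ * U * diagonal σ) * Vᵀ := by
    simp only [Matrix.mul_assoc]
  have htranspose : Vᵀ * (Qᵀ * U * diagonal σ) = (Uᵀ * Q * V)ᵀ * diagonal σ := by
    simp only [transpose_mul, transpose_transpose, Matrix.mul_assoc]
  rw [hcycle, trace_mul_comm, htranspose, trace]
  exact Finset.sum_congr rfl fun i _ => by rw [diag_apply, mul_diagonal, transpose_apply, mul_comm]

lemma transpose_mul_self_conj_eq_one {l p : Type*} [Fintype l] [Fintype p] [DecidableEq m]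
    [DecidableEq l] [DecidableEq p] {U : Matrix m n ℝ} {Q : Matrix m l ℝ} {V : Matrix l p ℝ}
    (hU : U * Uᵀ = 1) (hQ : Qᵀ * Q = 1) (hV : Vᵀ * V = 1) :
    (Uᵀ * Q * V)ᵀ * (Uᵀ * Q * V) = 1 := by
  calc (Uᵀ * Q * V)ᵀ * (Uᵀ * Q * V) = Vᵀ * (Qᵀ * (U * Uᵀ) * Q) * V := by
        simp only [transpose_mul, transpose_transpose, Matrix.mul_assoc]
    _ = 1 := by rw [hU, Matrix.mul_one, hQ, Matrix.mul_one, hV]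

lemma eq_mul_mul_transpose_iff [DecidableEq n] {U V Q B : Matrix n n ℝ} (hU : Uᵀ * U = 1)
    (hV : Vᵀ * V = 1) :
    Q = U * B * Vᵀ ↔ Uᵀ * Q * V = B := by
  have hU' : U * Uᵀ = 1 := mul_eq_one_comm.mp hU
  have hV' : V * Vᵀ = 1 := mul_eq_one_comm.mp hV
  constructor
  · rintro rfl
    calc Uᵀ * (U * B * Vᵀ) * V = (Uᵀ * U) * B * (Vᵀ * V) := by simp only [Matrix.mul_assoc]
      _ = B := by rw [hU, hV, Matrix.one_mul, Matrix.mul_one]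
  · rintro rfl
    calc Q = (U * Uᵀ) * Q * (V * Vᵀ) := by rw [hU', hV', Matrix.one_mul, Matrix.mul_one]
      _ = U * (Uᵀ * Q * V) * Vᵀ := by simp only [Matrix.mul_assoc]

end Conjugation

lemma transpose_submatrix_one_mul_submatrix_one {n a b : Type*} [Fintype n] [DecidableEq n]
    (f : a → n) (g : b → n) :
    ((1 : Matrix n n ℝ).submatrix id f)ᵀ * (1 : Matrix n n ℝ).submatrix id g
      = (1 : Matrix n n ℝ).submatrix f g := by
  rw [transpose_submatrix, transpose_one, ← submatrix_mul _ _ _ _ _ Function.bijective_id,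
    Matrix.one_mul]

section Columns

variable {k r : ℕ} (h : r ≤ k)

lemma sum_fin_eq_sum_castLE_add_sum (f : Fin k → ℝ) :
    ∑ i, f i = ∑ c : Fin r, f (Fin.castLE h c) + ∑ p : Fin (k - r), f ⟨r + p, by omega⟩ := by
  rw [← Fin.sum_congr' f (Nat.add_sub_of_le h), Fin.sum_univ_add]
  rfl

lemma colsFirst_eq_mul (M : Matrix (Fin k) (Fin k) ℝ) : colsFirst M r h = M * colsFirst 1 r h :=
  (mul_submatrix_one (Equiv.refl _) _ M).symm

lemma colsLast_eq_mul (M : Matrix (Fin k) (Fin k) ℝ) : colsLast M r h = M * colsLast 1 r h :=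
  (mul_submatrix_one (Equiv.refl _) _ M).symm

lemma colsFirst_one_transpose_mul_self : (colsFirst 1 r h)ᵀ * colsFirst 1 r h = 1 := by
  rw [colsFirst, transpose_submatrix_one_mul_submatrix_one]
  exact submatrix_one _ (Fin.castLE_injective h)

lemma colsLast_one_transpose_mul_self : (colsLast 1 r h)ᵀ * colsLast 1 r h = 1 := by
  rw [colsLast, transpose_submatrix_one_mul_submatrix_one]
  exact submatrix_one _ fun p q hpq => Fin.ext (by simpa using hpq)

lemma colsLast_one_transpose_mul_colsFirst_one : (colsLast 1 r h)ᵀ * colsFirst 1 r h = 0 := by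
  rw [colsLast, colsFirst, transpose_submatrix_one_mul_submatrix_one]
  ext p c
  exact one_apply_ne (Fin.ne_of_val_ne (by simp; omega))

lemma colsFirst_one_transpose_mul_colsLast_one : (colsFirst 1 r h)ᵀ * colsLast 1 r h = 0 := by
  rw [← transpose_transpose (colsLast 1 r h), ← transpose_mul,
    colsLast_one_transpose_mul_colsFirst_one, transpose_zero]

lemma colsFirst_mul_transpose_add_colsLast_mul_transpose (M N : Matrix (Fin k) (Fin k) ℝ) :
    colsFirst M r h * (colsFirst N r h)ᵀ + colsLast M r h * (colsLast N r h)ᵀ = M * Nᵀ := by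
  ext i j
  simp only [Matrix.add_apply, mul_apply, sum_fin_eq_sum_castLE_add_sum h (fun l => M i l * Nᵀ l j)]
  rfl

/-- The block-diagonal matrix `diag(I_r, W)`. -/
def blockDiagOne (W : Matrix (Fin (k - r)) (Fin (k - r)) ℝ) : Matrix (Fin k) (Fin k) ℝ :=
  colsFirst 1 r h * (colsFirst 1 r h)ᵀ + colsLast 1 r h * W * (colsLast 1 r h)ᵀ

variable {h}

lemma colsFirst_mul_transpose_add_colsLast_mul_mul_transpose (U V : Matrix (Fin k) (Fin k) ℝ)
    (W : Matrix (Fin (k - r)) (Fin (k - r)) ℝ) :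
    colsFirst U r h * (colsFirst V r h)ᵀ + colsLast U r h * W * (colsLast V r h)ᵀ
      = U * blockDiagOne h W * Vᵀ := by
  simp only [blockDiagOne, colsFirst_eq_mul h U, colsFirst_eq_mul h V, colsLast_eq_mul h U,
    colsLast_eq_mul h V, transpose_mul, Matrix.mul_add, Matrix.add_mul, Matrix.mul_assoc]

lemma blockDiagOne_mul_colsFirst_one (W : Matrix (Fin (k - r)) (Fin (k - r)) ℝ) :
    blockDiagOne h W * colsFirst 1 r h = colsFirst 1 r h := by
  simp only [blockDiagOne, Matrix.add_mul, Matrix.mul_assoc, colsFirst_one_transpose_mul_self,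
    colsLast_one_transpose_mul_colsFirst_one, Matrix.mul_one, Matrix.mul_zero, add_zero]

lemma blockDiagOne_mul_colsLast_one (W : Matrix (Fin (k - r)) (Fin (k - r)) ℝ) :
    blockDiagOne h W * colsLast 1 r h = colsLast 1 r h * W := by
  simp only [blockDiagOne, Matrix.add_mul, Matrix.mul_assoc, colsLast_one_transpose_mul_self,
    colsFirst_one_transpose_mul_colsLast_one, Matrix.mul_one, Matrix.mul_zero, zero_add]

lemma transpose_mul_self_eq_one_of_blockDiagOne {W : Matrix (Fin (k - r)) (Fin (k - r)) ℝ}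
    (hM : (blockDiagOne h W)ᵀ * blockDiagOne h W = 1) : Wᵀ * W = 1 := by
  calc Wᵀ * W = (colsLast 1 r h * W)ᵀ * (colsLast 1 r h * W) := by
        rw [transpose_mul, Matrix.mul_assoc, ← Matrix.mul_assoc (colsLast 1 r h)ᵀ,
          colsLast_one_transpose_mul_self, Matrix.one_mul]
    _ = (colsLast 1 r h)ᵀ * ((blockDiagOne h W)ᵀ * blockDiagOne h W) * colsLast 1 r h := by
        rw [← blockDiagOne_mul_colsLast_one, transpose_mul]; simp only [Matrix.mul_assoc]
    _ = 1 := by rw [hM, Matrix.mul_one, colsLast_one_transpose_mul_self]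

lemma mul_colsFirst_one_eq_iff {M : Matrix (Fin k) (Fin k) ℝ} (hM : Mᵀ * M = 1) :
    M * colsFirst 1 r h = colsFirst 1 r h ↔ ∀ i : Fin k, (i : ℕ) < r → M i i = 1 := by
  rw [← colsFirst_eq_mul]
  constructor
  · intro hME i hi
    simpa [colsFirst, one_apply, Fin.ext_iff] using congrFun (congrFun hME i) ⟨i, hi⟩
  · intro hdiag
    ext i c
    have hc : (Fin.castLE h c : ℕ) < r := by simp
    simp only [colsFirst, submatrix_apply, id_eq, one_apply]
    split_ifs with hic
    · rw [hic, hdiag _ hc]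
    · exact col_eq_zero_of_diag_eq_one hM (hdiag _ hc) hic

lemma eq_blockDiagOne_of_mul_colsFirst_one {M : Matrix (Fin k) (Fin k) ℝ} (hM : Mᵀ * M = 1)
    (hME : M * colsFirst 1 r h = colsFirst 1 r h) :
    M = blockDiagOne h ((colsLast 1 r h)ᵀ * M * colsLast 1 r h) := by
  set E := colsFirst 1 r h
  set F := colsLast 1 r h
  have hEM : Eᵀ * M = Eᵀ := by
    have hMtE : Mᵀ * E = E := by rw [← hME, ← Matrix.mul_assoc, hM, Matrix.one_mul, hME]
    rw [← transpose_transpose M, ← transpose_mul, hMtE]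
  have hsplit : E * Eᵀ + F * Fᵀ = 1 := by
    simpa using colsFirst_mul_transpose_add_colsLast_mul_transpose h 1 1
  calc M = (E * Eᵀ + F * Fᵀ) * M * (E * Eᵀ + F * Fᵀ) := by
        rw [hsplit, Matrix.one_mul, Matrix.mul_one]
    _ = E * (Eᵀ * M) * E * Eᵀ + E * (Eᵀ * M) * F * Fᵀ + F * Fᵀ * (M * E) * Eᵀ
          + F * (Fᵀ * M * F) * Fᵀ := by
        simp only [Matrix.add_mul, Matrix.mul_add, Matrix.mul_assoc]; abel
    _ = E * (Eᵀ * E) * Eᵀ + E * (Eᵀ * F) * Fᵀ + F * (Fᵀ * E) * Eᵀ + F * (Fᵀ * M * F) * Fᵀ := by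
        rw [hEM, hME]; simp only [Matrix.mul_assoc]
    _ = blockDiagOne h (Fᵀ * M * F) := by
        rw [colsFirst_one_transpose_mul_self, colsFirst_one_transpose_mul_colsLast_one,
          colsLast_one_transpose_mul_colsFirst_one]
        simp [blockDiagOne, E, F]

lemma mul_colsFirst_one_eq_iff_exists_blockDiagOne {M : Matrix (Fin k) (Fin k) ℝ}
    (hM : Mᵀ * M = 1) :
    M * colsFirst 1 r h = colsFirst 1 r h ↔
      ∃ W : Matrix (Fin (k - r)) (Fin (k - r)) ℝ, Wᵀ * W = 1 ∧ M = blockDiagOne h W := by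
  constructor
  · intro hME
    have hblock := eq_blockDiagOne_of_mul_colsFirst_one hM hME
    exact ⟨_, transpose_mul_self_eq_one_of_blockDiagOne (hblock ▸ hM), hblock⟩
  · rintro ⟨W, -, rfl⟩
    exact blockDiagOne_mul_colsFirst_one W

end Columns

lemma Matrix.IsHermitian.map_eigenvalues_eq_of_charpoly_eq {n : Type*} [Fintype n]
    [DecidableEq n] {A : Matrix n n ℝ} (hA : A.IsHermitian) {d : n → ℝ}
    (hd : A.charpoly = (diagonal d).charpoly) :
    Finset.univ.val.map hA.eigenvalues = Finset.univ.val.map d := by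
  have hroots := congrArg Polynomial.roots hd
  rw [hA.roots_charpoly_eq_eigenvalues, charpoly_diagonal, roots_prod _ _
    (Finset.prod_ne_zero_iff.mpr fun i _ => X_sub_C_ne_zero (d i))] at hroots
  simpa using hroots

theorem traceNorm_eq_sum_of_svd {m k : ℕ} {S U : Matrix (Fin m) (Fin k) ℝ}
    {V : Matrix (Fin k) (Fin k) ℝ} {σ : Fin k → ℝ} (hU : Uᵀ * U = 1) (hV : Vᵀ * V = 1)
    (hσ : ∀ i, 0 ≤ σ i) (hS : S = U * diagonal σ * Vᵀ) : traceNorm S = ∑ i, σ i := by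
  have hgram : Sᴴ * S = V * (diagonal (fun i => σ i * σ i) * Vᵀ) := by
    rw [conjTranspose_eq_transpose_of_trivial, hS]
    calc (U * diagonal σ * Vᵀ)ᵀ * (U * diagonal σ * Vᵀ)
        = V * (diagonal σ * (Uᵀ * U) * diagonal σ * Vᵀ) := by
          simp only [transpose_mul, transpose_transpose, diagonal_transpose, Matrix.mul_assoc]
      _ = V * (diagonal (fun i => σ i * σ i) * Vᵀ) := by
          rw [hU, Matrix.mul_one, diagonal_mul_diagonal]
  have hcharpoly : (Sᴴ * S).charpoly = (diagonal fun i => σ i * σ i).charpoly := by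
    rw [hgram, charpoly_mul_comm, Matrix.mul_assoc, hV, Matrix.mul_one]
  have heig := (isHermitian_conjTranspose_mul_self S).map_eigenvalues_eq_of_charpoly_eq hcharpoly
  calc traceNorm S = ((Finset.univ.val.map (isHermitian_conjTranspose_mul_self S).eigenvalues).map
        Real.sqrt).sum := by rw [Multiset.map_map]; rfl
    _ = ∑ i, Real.sqrt (σ i * σ i) := by rw [heig, Multiset.map_map]; rfl
    _ = ∑ i, σ i := Finset.sum_congr rfl fun i _ => Real.sqrt_mul_self (hσ i)

theorem stmt9_general {k : ℕ} (S : Matrix (Fin k) (Fin k) ℝ)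
    (U V : Matrix (Fin k) (Fin k) ℝ) (hU : Uᵀ * U = 1) (hV : Vᵀ * V = 1)
    (σ : Fin k → ℝ) (hσpos : ∀ i, 0 ≤ σ i)
    (hSVD : S = U * Matrix.diagonal σ * Vᵀ)
    (r : ℕ) (hrk : r ≤ k)
    (hσr : ∀ i : Fin k, 0 < σ i ↔ (i : ℕ) < r) :
    (∀ Q : Matrix (Fin k) (Fin k) ℝ, Qᵀ * Q = 1 → trace (Qᵀ * S) ≤ ∑ i, σ i)
      ∧ (∀ Q : Matrix (Fin k) (Fin k) ℝ, Qᵀ * Q = 1 →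
          (trace (Qᵀ * S) = ∑ i, σ i ↔
            ∃ W : Matrix (Fin (k - r)) (Fin (k - r)) ℝ, Wᵀ * W = 1 ∧
              Q = colsFirst U r hrk * (colsFirst V r hrk)ᵀ
                    + colsLast U r hrk * W * (colsLast V r hrk)ᵀ))
      ∧ (∃ Q : Matrix (Fin k) (Fin k) ℝ, Qᵀ * Q = 1 ∧ trace (Qᵀ * S) = ∑ i, σ i)
      ∧ ∑ i, σ i = traceNorm S := by
  have hUU : U * Uᵀ = 1 := mul_eq_one_comm.mp hU
  have hVV : V * Vᵀ = 1 := mul_eq_one_comm.mp hV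
  have horth : ∀ Q : Matrix (Fin k) (Fin k) ℝ, Qᵀ * Q = 1 → (Uᵀ * Q * V)ᵀ * (Uᵀ * Q * V) = 1 :=
    fun Q hQ => transpose_mul_self_conj_eq_one hUU hQ hV
  have htrace : ∀ Q, trace (Qᵀ * S) = ∑ i, σ i * (Uᵀ * Q * V) i i := by
    intro Q; rw [hSVD, trace_transpose_mul_svd]
  have hmax : ∀ Q : Matrix (Fin k) (Fin k) ℝ, Qᵀ * Q = 1 → (trace (Qᵀ * S) = ∑ i, σ i ↔
      Uᵀ * Q * V * colsFirst 1 r hrk = colsFirst 1 r hrk) := by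
    intro Q hQ
    rw [htrace, mul_colsFirst_one_eq_iff (horth Q hQ),
      sum_mul_eq_sum_iff_of_le_one hσpos (diag_le_one_of_transpose_mul_self (horth Q hQ))]
    simp only [hσr]
  have hmaximizer : (U * Vᵀ)ᵀ * (U * Vᵀ) = 1 := by
    calc (U * Vᵀ)ᵀ * (U * Vᵀ) = V * (Uᵀ * U) * Vᵀ := by
          simp only [transpose_mul, transpose_transpose, Matrix.mul_assoc]
      _ = 1 := by rw [hU, Matrix.mul_one, hVV]
  refine ⟨fun Q hQ => ?_, fun Q hQ => ?_, ⟨U * Vᵀ, hmaximizer, ?_⟩,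
    (traceNorm_eq_sum_of_svd hU hV hσpos hSVD).symm⟩
  · rw [htrace]
    exact sum_mul_le_sum_of_le_one hσpos (diag_le_one_of_transpose_mul_self (horth Q hQ))
  · simp only [hmax Q hQ, mul_colsFirst_one_eq_iff_exists_blockDiagOne (horth Q hQ),
      colsFirst_mul_transpose_add_colsLast_mul_mul_transpose, eq_mul_mul_transpose_iff hU hV]
  · rw [hmax _ hmaximizer]
    simp [← Matrix.mul_assoc Uᵀ, hU, hV]

/-- Lemma 3.3: characterization of the maximizers of `tr(QᵀS)` over the orthogonal group. -/
theorem stmt9 {k : ℕ} (S : Matrix (Fin k) (Fin k) ℝ)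
    (U V : Matrix (Fin k) (Fin k) ℝ) (hU : Uᵀ * U = 1) (hV : Vᵀ * V = 1)
    (σ : Fin k → ℝ) (hσmono : Antitone σ) (hσpos : ∀ i, 0 ≤ σ i)
    (hSVD : S = U * Matrix.diagonal σ * Vᵀ)
    (r : ℕ) (hr : r = S.rank) (hrk : r ≤ k)
    (hσr : ∀ i : Fin k, 0 < σ i ↔ (i : ℕ) < r) :
    (∀ Q : Matrix (Fin k) (Fin k) ℝ, Qᵀ * Q = 1 → trace (Qᵀ * S) ≤ ∑ i, σ i)
      ∧ (∀ Q : Matrix (Fin k) (Fin k) ℝ, Qᵀ * Q = 1 →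
          (trace (Qᵀ * S) = ∑ i, σ i ↔
            ∃ W : Matrix (Fin (k - r)) (Fin (k - r)) ℝ, Wᵀ * W = 1 ∧
              Q = colsFirst U r hrk * (colsFirst V r hrk)ᵀ
                    + colsLast U r hrk * W * (colsLast V r hrk)ᵀ))
      ∧ (∃ Q : Matrix (Fin k) (Fin k) ℝ, Qᵀ * Q = 1 ∧ trace (Qᵀ * S) = ∑ i, σ i)
      ∧ ∑ i, σ i = traceNorm S :=
  stmt9_general S U V hU hV σ hσpos hSVD r hrk hσr

end
end
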